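/- Let G be a positive definite d×d matrix, ρ a probability distribution on a finite set of vectors in R^d with G = Σ_a ρ(a) a aᵀ, and suppose max_a aᵀ G^{-1} a ≤ 2d. Then for any vector b in the set and any Δ with |Δ_a| ≤ ε for all a: |Σ_a ρ(a) Δ_a ⟨b, G^{-1} a⟩| ≤ ε √(2d). -/

import Mathlib

open Matrix Finset

lemma vecMulVec_mulVec' {d : ℕ} (x y u : Fin d → ℝ) :
    (vecMulVec x y).mulVec u = (y ⬝ᵥ u) • x := by
  ext i
  simp only [vecMulVec, mulVec, dotProduct, Matrix.of_apply, Pi.smul_apply, smul_eq_mul,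
    Finset.sum_mul]
  exact Finset.sum_congr rfl fun j _ => by ring

/-- Core misspecification inequality: for a design `ρ` with `g(ρ) ≤ 2d` and a
perturbation `Δ` bounded by `ε`, for any vector `b = a i₀` in the set,
`|∑_a ρ(a) Δ_a ⟨b, G⁻¹ a⟩| ≤ ε √(2d)`. -/
theorem stmt4 {ι : Type*} [Fintype ι] (d : ℕ) (ε : ℝ)
    (a : ι → (Fin d → ℝ)) (ρ : ι → ℝ) (hρ0 : ∀ i, 0 ≤ ρ i) (hρ1 : ∑ i, ρ i = 1)
    (G : Matrix (Fin d) (Fin d) ℝ)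
    (hG : G = ∑ i, ρ i • vecMulVec (a i) (a i))
    (hGpd : G.PosDef)
    (hg : ∀ i, a i ⬝ᵥ G⁻¹.mulVec (a i) ≤ 2 * d)
    (Δ : ι → ℝ) (hΔ : ∀ i, |Δ i| ≤ ε) (i₀ : ι) :
    |∑ i, ρ i * Δ i * (a i₀ ⬝ᵥ G⁻¹.mulVec (a i))| ≤ ε * Real.sqrt (2 * d) := by
  have hε : 0 ≤ ε := le_trans (abs_nonneg _) (hΔ i₀)
  set b := a i₀ with hb
  set M := G⁻¹ with hM
  set u := M.mulVec b with hu
  set c : ι → ℝ := fun i => b ⬝ᵥ M.mulVec (a i) with hc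
  -- symmetry of M
  have hMsym : Mᵀ = M := by
    have := (hGpd.isHermitian.inv : M.IsHermitian)
    simpa [Matrix.IsHermitian, Matrix.conjTranspose_eq_transpose_of_trivial] using this
  have hci : ∀ i, c i = a i ⬝ᵥ u := by
    intro i
    rw [hc, Matrix.dotProduct_mulVec, ← Matrix.mulVec_transpose, hMsym,
      dotProduct_comm]
  -- key: ∑ ρ c² = b ⬝ᵥ M b
  have hS : ∑ i, ρ i * c i ^ 2 = b ⬝ᵥ M.mulVec b := by
    have h1 : ∑ i, ρ i * c i ^ 2 = u ⬝ᵥ G.mulVec u := by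
      have hsum : (∑ i, ρ i • vecMulVec (a i) (a i)) *ᵥ u
          = ∑ i, (ρ i • vecMulVec (a i) (a i)) *ᵥ u := by
        ext j
        simp only [mulVec, dotProduct, Finset.sum_apply, Matrix.sum_apply, Finset.sum_mul]
        rw [Finset.sum_comm]
      have hdp : u ⬝ᵥ (∑ i, (ρ i • vecMulVec (a i) (a i)) *ᵥ u)
          = ∑ i, u ⬝ᵥ ((ρ i • vecMulVec (a i) (a i)) *ᵥ u) := by
        simp only [dotProduct, Finset.sum_apply, Finset.mul_sum]
        rw [Finset.sum_comm]
      rw [hG, hsum, hdp]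
      refine Finset.sum_congr rfl fun i _ => ?_
      rw [Matrix.smul_mulVec, dotProduct_smul, vecMulVec_mulVec',
        dotProduct_smul, hci i, smul_eq_mul, smul_eq_mul,
        dotProduct_comm]
      ring
    have hdet : IsUnit G.det := isUnit_iff_ne_zero.mpr hGpd.det_pos.ne'
    have h2 : G.mulVec u = b := by
      rw [hu, Matrix.mulVec_mulVec, hM, Matrix.mul_nonsing_inv G hdet,
        Matrix.one_mulVec]
    rw [h1, h2, dotProduct_comm]
  have hSle : ∑ i, ρ i * c i ^ 2 ≤ 2 * d := by rw [hS]; exact hg i₀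
  have hSnn : 0 ≤ ∑ i, ρ i * c i ^ 2 :=
    Finset.sum_nonneg fun i _ => mul_nonneg (hρ0 i) (sq_nonneg _)
  -- Jensen / Cauchy-Schwarz
  have hcs : (∑ i, ρ i * |c i|) ^ 2 ≤ ∑ i, ρ i * c i ^ 2 := by
    have := Finset.sum_mul_sq_le_sq_mul_sq Finset.univ
      (fun i => Real.sqrt (ρ i)) (fun i => Real.sqrt (ρ i) * |c i|)
    have e1 : ∀ i : ι, Real.sqrt (ρ i) * (Real.sqrt (ρ i) * |c i|) = ρ i * |c i| := by
      intro i; rw [← mul_assoc, Real.mul_self_sqrt (hρ0 i)]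
    have e2 : ∀ i : ι, Real.sqrt (ρ i) ^ 2 = ρ i := fun i => Real.sq_sqrt (hρ0 i)
    have e3 : ∀ i : ι, (Real.sqrt (ρ i) * |c i|) ^ 2 = ρ i * c i ^ 2 := by
      intro i; rw [mul_pow, Real.sq_sqrt (hρ0 i), sq_abs]
    simp only [e1, e2, e3, hρ1, one_mul] at this
    exact this
  have hsum_abs : ∑ i, ρ i * |c i| ≤ Real.sqrt (2 * d) := by
    have hnn : 0 ≤ ∑ i, ρ i * |c i| :=
      Finset.sum_nonneg fun i _ => mul_nonneg (hρ0 i) (abs_nonneg _)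
    rw [show (∑ i, ρ i * |c i|) = Real.sqrt ((∑ i, ρ i * |c i|) ^ 2) by
      rw [Real.sqrt_sq hnn]]
    exact Real.sqrt_le_sqrt (hcs.trans hSle)
  calc |∑ i, ρ i * Δ i * c i| ≤ ∑ i, |ρ i * Δ i * c i| :=
        Finset.abs_sum_le_sum_abs _ _
    _ = ∑ i, ρ i * |Δ i| * |c i| := by
        refine Finset.sum_congr rfl fun i _ => ?_
        rw [abs_mul, abs_mul, abs_of_nonneg (hρ0 i)]
    _ ≤ ∑ i, ρ i * ε * |c i| := by
        refine Finset.sum_le_sum fun i _ => ?_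
        exact mul_le_mul_of_nonneg_right
          (mul_le_mul_of_nonneg_left (hΔ i) (hρ0 i)) (abs_nonneg _)
    _ = ε * ∑ i, ρ i * |c i| := by
        rw [Finset.mul_sum]; exact Finset.sum_congr rfl fun i _ => by ring
    _ ≤ ε * Real.sqrt (2 * d) := mul_le_mul_of_nonneg_left hsum_abs hε
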